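/- arXiv:1402.3693 — 4 statements merged into one kernel-verified Lean document; each statement's English description precedes it below -/
import Mathlib

section
/- Let R be a commutative ring, V a free R-module, and A = R ⊕ V the trivial square-zero extension of R by V, with R regarded as an A-module via the augmentation A → R, (r, v) ↦ r. Then for every natural number n there is an R-linear isomorphism Tor_n^A(R, R) ≅ V^{⊗n}, the n-fold tensor power of V over R (with V^{⊗0} = R). -/
/-!
Over `A = R ⊕ V`, the augmentation module `R` has the resolution `Pₙ = A ⊗_R V^{⊗n}` with
differential `a ⊗ v₁ ⊗ ⋯ ⊗ vₙ₊₁ ↦ a v₁ ⊗ v₂ ⊗ ⋯ ⊗ vₙ₊₁`. Since `V² = 0` in `A`, the product `a v₁`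
only sees the `R`-component of `a`, so the differential factors as
`Pₙ₊₁ → V^{⊗(n+1)} ≅ V ⊗ V^{⊗n} ↪ Pₙ`, and exactness reduces to that of `V ⊗ N → A ⊗ N → N`, the
base change of `0 → V → A → R → 0`. The `Pₙ` are free over `A` because `V` is free over `R`.
Applying `R ⊗_A -` kills every differential, as `V` acts by zero on `R`; hence
`Tor_n^A(R, R) ≅ R ⊗_A Pₙ ≅ V^{⊗n}`.
-/

open CategoryTheory MonoidalCategory TensorProduct

noncomputable section

universe u v

instance PiTensorProduct.instFree {R ι : Type*} [CommSemiring R] [Finite ι] {M : ι → Type*}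
    [∀ i, AddCommMonoid (M i)] [∀ i, Module R (M i)] [∀ i, Module.Free R (M i)] :
    Module.Free R (⨂[R] i, M i) :=
  .of_basis (Basis.piTensorProduct fun i => Module.Free.chooseBasis R (M i))

def TensorPower.succEquiv (R M : Type*) [CommSemiring R] [AddCommMonoid M] [Module R M] (n : ℕ) :
    ⨂[R]^(n + 1) M ≃ₗ[R] M ⊗[R] ⨂[R]^n M :=
  (TensorProduct.congr (PiTensorProduct.subsingletonEquiv 0).symm (.refl R _) ≪≫ₗ
    TensorPower.mulEquiv ≪≫ₗ TensorPower.cast R M (add_comm 1 n)).symm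

namespace ModuleCat

variable {A : Type u} [Ring A] {M : Type v} [AddCommGroup M] [Module A M]
  (X : ℕ → Type v) [∀ n, AddCommGroup (X n)] [∀ n, Module A (X n)] (d : ∀ n, X (n + 1) →ₗ[A] X n)

def chainComplexOfLinearMaps (hd : ∀ n, d n ∘ₗ d (n + 1) = 0) : ChainComplex (ModuleCat A) ℕ :=
  ChainComplex.of (fun n => of A (X n)) (fun n => ofHom (d n)) fun n => hom_ext (hd n)

theorem chainComplexOfLinearMaps_d (hd : ∀ n, d n ∘ₗ d (n + 1) = 0) (n : ℕ) :
    (chainComplexOfLinearMaps X d hd).d (n + 1) n = ofHom (d n) :=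
  ChainComplex.of_d (fun n => of A (X n)) (fun n => ofHom (d n)) n

def projectiveResolutionOfExact [∀ n, Module.Projective A (X n)]
    (ε : X 0 →ₗ[A] M) (hε : Function.Surjective ε) (h₀ : Function.Exact (d 0) ε)
    (hd : ∀ n, Function.Exact (d (n + 1)) (d n)) : ProjectiveResolution (of A M) where
  complex := chainComplexOfLinearMaps X d fun n => (hd n).linearMap_comp_eq_zero
  projective n := (of A (X n)).projective_of_categoryTheory_projective
  π := (ChainComplex.toSingle₀Equiv _ _).symm
    ⟨ofHom ε, by rw [chainComplexOfLinearMaps_d]; exact hom_ext h₀.linearMap_comp_eq_zero⟩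
  quasiIso := ⟨fun
    | 0 => by
      rw [ChainComplex.quasiIsoAt₀_iff, ShortComplex.quasiIso_iff_of_zeros' _ ?_ rfl rfl,
        ShortComplex.ShortExact.moduleCat_exact_iff_function_exact, ModuleCat.epi_iff_surjective]
      · exact ⟨h₀, hε⟩
      · simp only [HomologicalComplex.shortComplexFunctor'_obj_g]
        exact HomologicalComplex.shape _ 0 0 (by simp)
    | n + 1 => by
      rw [quasiIsoAt_iff_exactAt' _ _ (ChainComplex.exactAt_succ_single_obj _ _),
        HomologicalComplex.exactAt_iff' _ (n + 2) (n + 1) n (by simp) (by simp),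
        ShortComplex.ShortExact.moduleCat_exact_iff_function_exact]
      simp only [HomologicalComplex.shortComplexFunctor'_obj_f,
        HomologicalComplex.shortComplexFunctor'_obj_g, chainComplexOfLinearMaps_d]
      exact hd n⟩

theorem projectiveResolutionOfExact_complex_d [∀ n, Module.Projective A (X n)]
    (ε : X 0 →ₗ[A] M) (hε : Function.Surjective ε) (h₀ : Function.Exact (d 0) ε)
    (hd : ∀ n, Function.Exact (d (n + 1)) (d n)) (n : ℕ) :
    (projectiveResolutionOfExact X d ε hε h₀ hd).complex.d (n + 1) n = ofHom (d n) :=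
  chainComplexOfLinearMaps_d X d (fun n => (hd n).linearMap_comp_eq_zero) n

end ModuleCat

namespace CategoryTheory.ProjectiveResolution

variable {C D : Type*} [Category C] [Category D] [Abelian C] [Abelian D]
  [HasProjectiveResolutions C] {X : C} (P : ProjectiveResolution X) (F : C ⥤ D) [F.Additive]

def isoLeftDerivedObjOfMapDEqZero (hF : ∀ n, F.map (P.complex.d (n + 1) n) = 0) (n : ℕ) :
    (F.leftDerived n).obj X ≅ F.obj (P.complex.X n) :=
  have hd : ∀ i j, ((F.mapHomologicalComplex _).obj P.complex).d i j = 0 := by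
    intro i j
    by_cases hij : i = j + 1
    · subst hij
      exact hF j
    · exact HomologicalComplex.shape _ _ _ fun h => hij h.symm
  P.isoLeftDerivedObj F n ≪≫ (ShortComplex.LeftHomologyData.ofZeros _ (hd _ _) (hd _ _)).homologyIso

end CategoryTheory.ProjectiveResolution

namespace TrivSqZeroExt

local notation "tsze" => TrivSqZeroExt

section Tensor

variable (R V : Type*) [CommRing R] [AddCommGroup V] [Module R V]
  (N : Type*) [AddCommGroup N] [Module R N]

abbrev inrTensor : V ⊗[R] N →ₗ[R] tsze R V ⊗[R] N := (inrHom R V).rTensor N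

theorem inrTensor_injective : Function.Injective (inrTensor R V N) := by
  have h : sndHom R V ∘ₗ inrHom R V = LinearMap.id := LinearMap.ext (snd_inr R)
  refine Function.LeftInverse.injective (g := (sndHom R V).rTensor N) fun t => ?_
  rw [← LinearMap.comp_apply, ← LinearMap.rTensor_comp, h, LinearMap.rTensor_id,
    LinearMap.id_apply]

variable [Module Rᵐᵒᵖ V] [IsCentralScalar R V]

abbrev fstTensor : tsze R V ⊗[R] N →ₗ[R] N :=
  TensorProduct.lid R N ∘ₗ (fstHom R R V).toLinearMap.rTensor N

theorem exact_inrHom_fstHom : Function.Exact (inrHom R V) (fstHom R R V) := by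
  intro x
  constructor
  · intro hx
    exact ⟨x.snd, ext hx.symm rfl⟩
  · rintro ⟨v, rfl⟩
    rfl

theorem exact_inrTensor_fstTensor : Function.Exact (inrTensor R V N) (fstTensor R V N) :=
  LinearEquiv.postcomp_exact_iff_exact.mpr <|
    rTensor_exact N (exact_inrHom_fstHom R V) fun r => ⟨inl r, fst_inl V r⟩

theorem fstTensor_surjective : Function.Surjective (fstTensor R V N) :=
  (TensorProduct.lid R N).surjective.comp <|
    LinearMap.rTensor_surjective N fun r => ⟨inl r, fst_inl V r⟩

theorem smul_inrTensor (a : tsze R V) (t : V ⊗[R] N) :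
    a • inrTensor R V N t = a.fst • inrTensor R V N t := by
  induction t with
  | zero => simp
  | add x y hx hy => simp only [map_add, smul_add, hx, hy]
  | tmul v x =>
    simp only [LinearMap.rTensor_tmul, inrHom_apply, smul_tmul', smul_eq_mul]
    congr 1
    ext <;> simp

variable {R V N} in
theorem restrictScalars_liftBaseChange {Q : Type*} [AddCommGroup Q] [Module R Q]
    [Module (tsze R V) Q] [IsScalarTower R (tsze R V) Q] (f : N →ₗ[R] Q)
    (hf : ∀ (a : tsze R V) x, a • f x = a.fst • f x) :
    (f.liftBaseChange (tsze R V)).restrictScalars R = f ∘ₗ fstTensor R V N := by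
  ext a x
  simp [hf]

variable {R V N} in
theorem exact_comp_fstTensor {M Q : Type*} [AddCommGroup M] [Module R M] [AddCommGroup Q]
    [Module R Q] {f : M →ₗ[R] V ⊗[R] N} (hf : Function.Surjective f) {g : N →ₗ[R] Q}
    (hg : Function.Injective g) :
    Function.Exact ((inrTensor R V N ∘ₗ f) ∘ₗ fstTensor R V M) (g ∘ₗ fstTensor R V N) := by
  rw [LinearMap.comp_assoc, hg.comp_exact_iff_exact,
    (hf.comp (fstTensor_surjective R V M)).comp_exact_iff_exact]
  exact exact_inrTensor_fstTensor R V N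

end Tensor

variable (R V : Type u) [CommRing R] [AddCommGroup V] [Module R V] [Module Rᵐᵒᵖ V]
  [IsCentralScalar R V]

local instance augmentationModule : Module (tsze R V) R :=
  Module.compHom R (fstHom R R V).toRingHom

theorem isScalarTower_augmentation : IsScalarTower R (tsze R V) R :=
  ⟨fun r a x => mul_assoc r a.fst x⟩

attribute [local instance] isScalarTower_augmentation

theorem tmul_inrTensor_eq_zero (N : Type*) [AddCommGroup N] [Module R N] (r : R) (t : V ⊗[R] N) :
    (r ⊗ₜ[tsze R V] inrTensor R V N t : R ⊗[tsze R V] (tsze R V ⊗[R] N)) = 0 := by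
  refine (AlgebraTensorModule.cancelBaseChange R (tsze R V) (tsze R V) R N).injective ?_
  rw [map_zero]
  induction t with
  | zero => simp
  | add x y hx hy => rw [map_add, tmul_add, map_add, hx, hy, add_zero]
  | tmul v x =>
    rw [LinearMap.rTensor_tmul, AlgebraTensorModule.cancelBaseChange_tmul]
    exact (congrArg (· ⊗ₜ[R] x) (zero_mul r)).trans (zero_tmul R x)

def tensorPowerResolutionD (n : ℕ) :
    tsze R V ⊗[R] ⨂[R]^(n + 1) V →ₗ[tsze R V] tsze R V ⊗[R] ⨂[R]^n V :=
  (inrTensor R V _ ∘ₗ (TensorPower.succEquiv R V n).toLinearMap).liftBaseChange (tsze R V)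

theorem restrictScalars_tensorPowerResolutionD (n : ℕ) :
    (tensorPowerResolutionD R V n).restrictScalars R =
      (inrTensor R V _ ∘ₗ (TensorPower.succEquiv R V n).toLinearMap) ∘ₗ fstTensor R V _ :=
  restrictScalars_liftBaseChange _ fun a _ => smul_inrTensor R V _ a _

def augmentation : tsze R V ⊗[R] ⨂[R]^0 V →ₗ[tsze R V] R :=
  (TensorPower.algebraMap₀.symm.toLinearMap).liftBaseChange (tsze R V)

theorem restrictScalars_augmentation :
    (augmentation R V).restrictScalars R =
      TensorPower.algebraMap₀.symm.toLinearMap ∘ₗ fstTensor R V _ :=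
  restrictScalars_liftBaseChange _ fun _ _ => rfl

theorem exact_tensorPowerResolutionD (n : ℕ) :
    Function.Exact (tensorPowerResolutionD R V (n + 1)) (tensorPowerResolutionD R V n) := by
  show Function.Exact ((tensorPowerResolutionD R V (n + 1)).restrictScalars R)
    ((tensorPowerResolutionD R V n).restrictScalars R)
  rw [restrictScalars_tensorPowerResolutionD, restrictScalars_tensorPowerResolutionD]
  exact exact_comp_fstTensor (LinearEquiv.surjective _)
    ((inrTensor_injective R V _).comp (LinearEquiv.injective _))

theorem exact_tensorPowerResolutionD_augmentation :
    Function.Exact (tensorPowerResolutionD R V 0) (augmentation R V) := by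
  show Function.Exact ((tensorPowerResolutionD R V 0).restrictScalars R)
    ((augmentation R V).restrictScalars R)
  rw [restrictScalars_tensorPowerResolutionD, restrictScalars_augmentation]
  exact exact_comp_fstTensor (LinearEquiv.surjective _) (LinearEquiv.injective _)

theorem augmentation_surjective : Function.Surjective (augmentation R V) := by
  show Function.Surjective ((augmentation R V).restrictScalars R)
  rw [restrictScalars_augmentation]
  exact TensorPower.algebraMap₀.symm.surjective.comp (fstTensor_surjective R V _)

theorem lTensor_tensorPowerResolutionD (n : ℕ) :
    (tensorPowerResolutionD R V n).lTensor R = 0 := by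
  refine TensorProduct.ext' fun r x => ?_
  rw [LinearMap.lTensor_tmul, ← LinearMap.restrictScalars_apply R,
    restrictScalars_tensorPowerResolutionD]
  exact tmul_inrTensor_eq_zero R V _ r _

def tensorPowerResolution [Module.Free R V] : ProjectiveResolution (ModuleCat.of (tsze R V) R) :=
  ModuleCat.projectiveResolutionOfExact (fun n => tsze R V ⊗[R] ⨂[R]^n V)
    (tensorPowerResolutionD R V) (augmentation R V) (augmentation_surjective R V)
    (exact_tensorPowerResolutionD_augmentation R V) (exact_tensorPowerResolutionD R V)

theorem tensoringLeft_map_tensorPowerResolution_d [Module.Free R V] (n : ℕ) :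
    ((tensoringLeft _).obj (ModuleCat.of (tsze R V) R)).map
      ((tensorPowerResolution R V).complex.d (n + 1) n) = 0 := by
  rw [tensorPowerResolution, ModuleCat.projectiveResolutionOfExact_complex_d]
  exact ModuleCat.hom_ext (lTensor_tensorPowerResolutionD R V n)

def torEquivTensorPower [Module.Free R V] (n : ℕ) :
    letI T := ((Tor (ModuleCat (tsze R V)) n).obj (ModuleCat.of (tsze R V) R)).obj
      (ModuleCat.of (tsze R V) R)
    letI : Module R T := Module.compHom T (algebraMap R (tsze R V))
    T ≃ₗ[R] ⨂[R]^n V :=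
  letI T := ((Tor (ModuleCat (tsze R V)) n).obj (ModuleCat.of (tsze R V) R)).obj
    (ModuleCat.of (tsze R V) R)
  letI : Module R T := Module.compHom T (algebraMap R (tsze R V))
  haveI : IsScalarTower R (tsze R V) T := IsScalarTower.of_compHom R (tsze R V) T
  let e : T ≃ₗ[tsze R V] R ⊗[tsze R V] (tsze R V ⊗[R] ⨂[R]^n V) :=
    ((tensorPowerResolution R V).isoLeftDerivedObjOfMapDEqZero _
      (tensoringLeft_map_tensorPowerResolution_d R V) n).toLinearEquiv
  (e ≪≫ₗ AlgebraTensorModule.cancelBaseChange R (tsze R V) (tsze R V) R _).restrictScalars R ≪≫ₗ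
    TensorProduct.lid R _

end TrivSqZeroExt

/-- The (ungraded) module content of Proposition 2.2.1 of the paper:
for the trivial square-zero extension `A = R ⊕ V` of a commutative ring `R`
by a free `R`-module `V`, with `R` an `A`-module via the augmentation
`(r, v) ↦ r`, one has `Tor_n^A(R, R) ≅ V^{⊗ n}` as `R`-modules. -/
theorem tor_trivSqZeroExt_iso_tensorPower
    (R V : Type) [CommRing R] [AddCommGroup V] [Module R V] [Module.Free R V]
    (n : ℕ) :
    letI : Module Rᵐᵒᵖ V :=
      Module.compHom V ((RingHom.id R).fromOpposite fun x y => mul_comm x y)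
    letI : IsCentralScalar R V := ⟨fun _ _ => rfl⟩
    letI A := TrivSqZeroExt R V
    letI : Module A R := Module.compHom R (TrivSqZeroExt.fstHom R R V).toRingHom
    letI M : ModuleCat A := ModuleCat.of A R
    letI T := ((Tor (ModuleCat A) n).obj M).obj M
    letI : Module R T := Module.compHom T (algebraMap R A)
    Nonempty (T ≃ₗ[R] TensorPower R n V) := by
  let _ : Module Rᵐᵒᵖ V := Module.compHom V ((RingHom.id R).fromOpposite fun x y => mul_comm x y)
  have : IsCentralScalar R V := ⟨fun _ _ => rfl⟩
  exact ⟨TrivSqZeroExt.torEquivTensorPower R V n⟩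
end
end

section
/- Let p be an odd prime and k₀ ≥ 1 a natural number, and set n = (p−1)·k₀ (an even positive integer). Then the p-adic valuation of the rational number B_n / n, where B_n is the n-th Bernoulli number, equals −(1 + v_p(k₀)); that is, padicValRat p (bernoulli n / n) = −(1 + padicValNat p k₀). -/
/-! By von Staudt–Clausen, `B_{2k} + ∑ 1/q` over the primes `q` with `(q - 1) ∣ 2k` is an
integer. For a prime `p` in that sum every term other than `1/p` is `p`-integral, so the ultrametric
inequality gives `v_p(B_{2k}) = -1`. Since `p ∤ p - 1`, dividing by `n = (p - 1) k₀` lowers the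
valuation by exactly `v_p(k₀)`. -/

open Finset

lemma padicNorm_sum_one_div_primes_le_one {p : ℕ} [Fact p.Prime] {s : Finset ℕ}
    (hs : ∀ q ∈ s, q.Prime ∧ q ≠ p) : padicNorm p (∑ q ∈ s, (1 : ℚ) / q) ≤ 1 :=
  padicNorm.sum_le' (fun q hq => by
    obtain ⟨hq, hqp⟩ := hs q hq
    have := Fact.mk hq
    rw [padicNorm.div, padicNorm.one, padicNorm.padicNorm_of_prime_of_ne hqp.symm, div_one])
    zero_le_one

lemma padicNorm_bernoulli_two_mul {p k : ℕ} [hp : Fact p.Prime] (hk : 0 < k)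
    (hdvd : (p - 1) ∣ 2 * k) : padicNorm p (bernoulli (2 * k)) = p := by
  obtain ⟨N, hN⟩ := Bernoulli.vonStaudt_clausen k
  set S := {q ∈ range (2 * k + 2) | q.Prime ∧ (q - 1) ∣ 2 * k}
  have hpS : p ∈ S := by
    have := Nat.le_of_dvd (by omega) hdvd
    simp only [S, mem_filter, mem_range]
    exact ⟨by omega, hp.out, hdvd⟩
  rw [← add_sum_erase _ _ hpS] at hN
  have hB : bernoulli (2 * k) = (N - ∑ q ∈ S.erase p, (1 : ℚ) / q) + -(1 / p) := by linarith
  have hrest : padicNorm p (N - ∑ q ∈ S.erase p, (1 : ℚ) / q) ≤ 1 :=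
    padicNorm.sub.trans <| max_le (padicNorm.of_int N) <|
      padicNorm_sum_one_div_primes_le_one fun q hq => ⟨(mem_filter.mp (mem_of_mem_erase hq)).2.1,
        ne_of_mem_erase hq⟩
  have hinv : padicNorm p (-(1 / p)) = p := by
    rw [padicNorm.neg, padicNorm.div, padicNorm.one, padicNorm.padicNorm_p_of_prime, one_div,
      inv_inv]
  have hp1 : (1 : ℚ) < p := by exact_mod_cast hp.out.one_lt
  rw [hB, padicNorm.add_eq_max_of_ne (by rw [hinv]; linarith), hinv, max_eq_right (by linarith)]

lemma padicValRat_bernoulli_two_mul {p k : ℕ} [hp : Fact p.Prime] (hk : 0 < k)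
    (hdvd : (p - 1) ∣ 2 * k) : padicValRat p (bernoulli (2 * k)) = -1 := by
  have hnorm := padicNorm_bernoulli_two_mul hk hdvd
  have hB : bernoulli (2 * k) ≠ 0 := fun h => by
    rw [h, padicNorm.zero] at hnorm
    exact hp.out.ne_zero (by exact_mod_cast hnorm.symm)
  have hp1 : (1 : ℚ) < p := by exact_mod_cast hp.out.one_lt
  rw [padicNorm.eq_zpow_of_nonzero hB] at hnorm
  have := (zpow_right_inj₀ (by positivity) hp1.ne').mp (hnorm.trans (zpow_one _).symm)
  omega

/-- Von Staudt–Clausen content of §1.1 of the paper: for an odd prime `p` and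
`n = (p-1)·k₀`, the `p`-adic valuation of the Bernoulli quotient `B_n / n`
equals `-(1 + v_p(k₀))`. -/
theorem padicValRat_bernoulli_quotient (p : ℕ) (hp : p.Prime) (hodd : Odd p)
    (k₀ : ℕ) (hk₀ : 1 ≤ k₀) :
    padicValRat p (bernoulli ((p - 1) * k₀) / (((p - 1) * k₀ : ℕ) : ℚ)) =
      -(1 + (padicValNat p k₀ : ℤ)) := by
  have := Fact.mk hp
  obtain ⟨m, hm⟩ : Even (p - 1) := Nat.Odd.sub_odd hodd odd_one
  have hp2 := hp.two_le
  have hm0 : 0 < m := by omega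
  have hn : (p - 1) * k₀ = 2 * (m * k₀) := by rw [hm]; ring
  have hB := padicValRat_bernoulli_two_mul (p := p) (k := m * k₀) (by positivity)
    (hn ▸ dvd_mul_right _ _)
  have hp_not_dvd : ¬ p ∣ p - 1 := fun h => by have := Nat.le_of_dvd (by omega) h; omega
  have hB0 : bernoulli ((p - 1) * k₀) ≠ 0 := by rw [hn]; exact fun h => by simp [h] at hB
  rw [padicValRat.div hB0 (by rw [hn]; positivity),
    padicValRat.of_nat, padicValNat.mul (by omega) (by omega),
    padicValNat.eq_zero_of_not_dvd hp_not_dvd, hn, hB]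
  push_cast
  ring
end

section
/- Let p be an odd prime and k ≥ 1 a natural number such that (p−1) does not divide 2k. Then the rational number B_{2k} / (2k), where B_{2k} is the 2k-th Bernoulli number, is p-integral; that is, padicValRat p (bernoulli (2k) / (2k)) ≥ 0. -/
/-!
Since `(ℤ/p)ˣ` is cyclic of order `p - 1 ∤ m`, some `a` prime to `p` has `a ^ m ≢ 1 [MOD p]`.
Multiplication by `a` permutes the residues modulo `n = p ^ N`, and expanding
`(a j) ^ m = (r + n q) ^ m` to first order in `n` gives Voronoi's congruence
`(a ^ m - 1) S_m(n) ≡ m n Z [ZMOD n ^ 2]` for the power sum `S_m(n) = ∑_{j<n} j ^ m`.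
By Faulhaber's formula `S_m(n) = B_m n + O(p ^ (2 - 2N))`, because by von Staudt–Clausen the
`B_j` have at most a simple pole at `p`. For `N = v_p(m) + 2` every error term is at most
`|m n|_p`, while `|a ^ m - 1|_p = 1`; hence `|B_m n|_p ≤ |m n|_p`.
-/

open Finset

theorem Nat.Coprime.sum_range_mul_mod {M : Type*} [AddCommMonoid M] {a n : ℕ} (ha : a.Coprime n)
    (f : ℕ → M) : ∑ j ∈ range n, f (a * j % n) = ∑ j ∈ range n, f j := by
  have hmaps : Set.MapsTo (fun j => a * j % n) (range n : Set ℕ) (range n) := fun j hj =>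
    mem_range.2 (Nat.mod_lt _ (Nat.zero_lt_of_lt (mem_range.1 (mem_coe.1 hj))))
  have hinj : Set.InjOn (fun j => a * j % n) (range n : Set ℕ) := fun i hi j hj h =>
    (Nat.ModEq.cancel_left_of_coprime ha.symm h).eq_of_lt_of_lt (mem_range.1 hi) (mem_range.1 hj)
  exact sum_nbij _ hmaps hinj (surjOn_of_injOn_of_card_le _ hmaps hinj le_rfl) fun _ _ => rfl

theorem exists_sq_dvd_pow_sub_one_mul_sum_range_pow_sub {a n : ℕ} (ha : a.Coprime n) (m : ℕ) :
    ∃ Z : ℤ, (n : ℤ) ^ 2 ∣ ((a : ℤ) ^ m - 1) * ∑ j ∈ range n, (j : ℤ) ^ m - m * n * Z := by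
  set r : ℕ → ℤ := fun j => (a * j % n : ℕ)
  set q : ℕ → ℤ := fun j => (a * j / n : ℕ)
  refine ⟨∑ j ∈ range n, r j ^ (m - 1) * q j, ?_⟩
  have hdiv : ∀ j, r j + n * q j = a * j := fun j => by
    simp only [r, q]; exact_mod_cast Nat.mod_add_div (a * j) n
  have hperm : ∑ j ∈ range n, r j ^ m = ∑ j ∈ range n, (j : ℤ) ^ m :=
    ha.sum_range_mul_mod fun j => (j : ℤ) ^ m
  have hexpand : ((a : ℤ) ^ m - 1) * ∑ j ∈ range n, (j : ℤ) ^ m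
        - m * n * ∑ j ∈ range n, r j ^ (m - 1) * q j
      = ∑ j ∈ range n, ((r j + n * q j) ^ m - r j ^ (m - 1) * (n * q j) * m - r j ^ m) := by
    have hpow : ∑ j ∈ range n, (r j + n * q j) ^ m = (a : ℤ) ^ m * ∑ j ∈ range n, (j : ℤ) ^ m := by
      simp only [hdiv, mul_pow, mul_sum]
    have hlin : ∑ j ∈ range n, r j ^ (m - 1) * (n * q j) * m
        = m * n * ∑ j ∈ range n, r j ^ (m - 1) * q j := by
      rw [mul_sum]; exact sum_congr rfl fun j _ => by ring
    rw [sum_sub_distrib, sum_sub_distrib, hpow, hlin, hperm]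
    ring
  rw [hexpand]
  exact dvd_sum fun j _ =>
    (pow_dvd_pow_of_dvd (dvd_mul_right _ _) 2).trans (sq_dvd_add_pow_sub_sub _ _ _)

theorem ZMod.exists_natCast_ne_zero_pow_ne_one {p : ℕ} [Fact p.Prime] {m : ℕ}
    (hm : ¬ (p - 1) ∣ m) : ∃ a : ℕ, (a : ZMod p) ≠ 0 ∧ (a : ZMod p) ^ m ≠ 1 := by
  obtain ⟨g, hg⟩ : ∃ g : (ZMod p)ˣ, g ^ m ≠ 1 := by
    by_contra! h
    apply hm
    rw [← ZMod.card_units p, ← Nat.card_eq_fintype_card, ← IsCyclic.exponent_eq_card]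
    exact Monoid.exponent_dvd_of_forall_pow_eq_one h
  refine ⟨(g : ZMod p).val, by simp, fun h => hg (Units.ext ?_)⟩
  simpa using h

theorem sum_range_pow_sub_bernoulli_mul (m n : ℕ) :
    ∑ j ∈ range n, (j : ℚ) ^ m - bernoulli m * n
      = ∑ j ∈ range m, bernoulli j * m.choose j * (n : ℚ) ^ (m + 1 - j) / (m + 1 - j : ℕ) := by
  rw [sum_range_pow, sum_range_succ, Nat.choose_succ_self_right, Nat.add_sub_cancel_left]
  have hlast : bernoulli m * ((m + 1 : ℕ) : ℚ) * (n : ℚ) ^ 1 / (m + 1) = bernoulli m * n := by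
    push_cast; field_simp
  rw [hlast, add_sub_cancel_right]
  refine sum_congr rfl fun j hj => ?_
  have hj : j < m + 1 := by have := mem_range.1 hj; omega
  have hchoose : ((m + 1).choose j : ℚ) * (m + 1 - j : ℕ) = m.choose j * (m + 1) := by
    exact_mod_cast (Nat.choose_mul_succ_eq m j).symm
  have ht : ((m + 1 - j : ℕ) : ℚ) ≠ 0 := by exact_mod_cast (Nat.sub_pos_of_lt hj).ne'
  field_simp
  linear_combination bernoulli j * (n : ℚ) ^ (m + 1 - j) * hchoose

namespace padicNorm

variable {p : ℕ} [hp : Fact p.Prime]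

theorem one_div_prime_le {q : ℕ} (hq : q.Prime) : padicNorm p (1 / q) ≤ p := by
  rw [padicNorm.div, padicNorm.one]
  rcases eq_or_ne p q with rfl | hne
  · simp [padicNorm_p_of_prime]
  · have : Fact q.Prime := ⟨hq⟩
    rw [padicNorm_of_prime_of_ne hne, div_one]
    exact_mod_cast hp.out.one_le

theorem bernoulli_le (m : ℕ) : padicNorm p (bernoulli m) ≤ p := by
  have hp0 : (0 : ℚ) ≤ p := Nat.cast_nonneg p
  obtain ⟨k, rfl⟩ | hodd := Nat.even_or_odd m
  · obtain ⟨z, hz⟩ := Bernoulli.vonStaudt_clausen k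
    rw [← two_mul, eq_sub_of_add_eq hz.symm]
    refine padicNorm.sub.trans (max_le ((padicNorm.of_int z).trans ?_) ?_)
    · exact_mod_cast hp.out.one_le
    · exact padicNorm.sum_le' (fun q hq => one_div_prime_le (mem_filter.1 hq).2.1) hp0
  · rcases eq_or_ne m 1 with rfl | hm
    · rw [bernoulli_one, neg_div, padicNorm.neg]
      exact_mod_cast one_div_prime_le Nat.prime_two
    · rw [bernoulli_eq_zero_of_odd hodd (by have := hodd.pos; omega), padicNorm.zero]
      exact hp0

theorem natCast_inv_le {t : ℕ} (ht : t ≠ 0) : padicNorm p (t : ℚ)⁻¹ ≤ p ^ ((t : ℤ) - 1) := by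
  rw [padicNorm.eq_zpow_of_nonzero (by positivity), padicValRat.inv, padicValRat.of_nat, neg_neg]
  have := Nat.padicValNat_lt_self (p := p) ht
  exact zpow_le_zpow_right₀ (mod_cast hp.out.one_le) (by omega)

theorem padicNorm_p_pow (k : ℕ) : padicNorm p ((p : ℚ) ^ k) = p ^ (-(k : ℤ)) := by
  rw [IsAbsoluteValue.abv_pow (padicNorm p), padicNorm_p_of_prime, inv_pow, zpow_neg, zpow_natCast]

theorem sum_range_pow_sub_bernoulli_mul_le (m : ℕ) {N : ℕ} (hN : 1 ≤ N) :
    padicNorm p (∑ j ∈ range (p ^ N), (j : ℚ) ^ m - bernoulli m * (p ^ N : ℕ))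
      ≤ p ^ (-2 * ((N : ℤ) - 1)) := by
  have hp1 : (1 : ℚ) < p := mod_cast hp.out.one_lt
  rw [sum_range_pow_sub_bernoulli_mul]
  refine padicNorm.sum_le' (fun j hj => ?_) (by positivity)
  set t := m + 1 - j
  have ht : 2 ≤ t := by have := mem_range.1 hj; omega
  calc padicNorm p (bernoulli j * m.choose j * ((p ^ N : ℕ) : ℚ) ^ t / (t : ℕ))
      = padicNorm p (bernoulli j) * padicNorm p (m.choose j)
          * p ^ (-((N * t : ℕ) : ℤ)) * padicNorm p (t : ℚ)⁻¹ := by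
        rw [div_eq_mul_inv, padicNorm.mul, padicNorm.mul, padicNorm.mul, Nat.cast_pow, ← pow_mul,
          padicNorm_p_pow]
    _ ≤ p * 1 * p ^ (-((N * t : ℕ) : ℤ)) * p ^ ((t : ℤ) - 1) := by
        gcongr
        · exact padicNorm.nonneg _
        · exact padicNorm.nonneg _
        · exact bernoulli_le j
        · exact padicNorm.of_nat _
        · exact natCast_inv_le (by omega)
    _ = p ^ (1 + -((N * t : ℕ) : ℤ) + ((t : ℤ) - 1)) := by
        rw [zpow_add₀ (by positivity), zpow_add₀ (by positivity), zpow_one, mul_one]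
    _ ≤ p ^ (-2 * ((N : ℤ) - 1)) := by
        refine zpow_le_zpow_right₀ hp1.le ?_
        push_cast
        nlinarith

theorem bernoulli_le_natCast_of_not_dvd {m : ℕ} (hm : ¬ (p - 1) ∣ m) :
    padicNorm p (bernoulli m) ≤ padicNorm p m := by
  have hp0 : (p : ℚ) ≠ 0 := mod_cast hp.out.ne_zero
  have hp1 : (1 : ℚ) < p := mod_cast hp.out.one_lt
  have hm0 : m ≠ 0 := by rintro rfl; exact hm (dvd_zero _)
  set e := padicValNat p m
  -- this makes the Faulhaber error `p ^ (2 - 2N)` equal to `|m p ^ N|_p`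
  set N := e + 2
  have hnorm_m : padicNorm p m = p ^ (-(e : ℤ)) := by
    rw [padicNorm.eq_zpow_of_nonzero (by exact_mod_cast hm0), padicValRat.of_nat]
  have hnorm_n : padicNorm p ((p ^ N : ℕ) : ℚ) = p ^ (-(N : ℤ)) := by
    rw [Nat.cast_pow, padicNorm_p_pow]
  obtain ⟨a, ha0, ham⟩ := ZMod.exists_natCast_ne_zero_pow_ne_one hm
  have hcop : a.Coprime (p ^ N) := by
    refine Nat.Coprime.pow_right N (Nat.coprime_comm.1 (hp.out.coprime_iff_not_dvd.2 ?_))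
    rwa [Ne, ZMod.natCast_eq_zero_iff] at ha0
  have hunit : padicNorm p ((a : ℚ) ^ m - 1) = 1 := by
    have := (padicNorm.int_eq_one_iff ((a : ℤ) ^ m - 1)).2 <| by
      rw [← ZMod.intCast_zmod_eq_zero_iff_dvd]
      push_cast
      exact sub_ne_zero.2 ham
    exact_mod_cast this
  obtain ⟨Z, hZ⟩ := exists_sq_dvd_pow_sub_one_mul_sum_range_pow_sub hcop m
  set X : ℤ := ((a : ℤ) ^ m - 1) * ∑ j ∈ range (p ^ N), (j : ℤ) ^ m - m * (p ^ N : ℕ) * Z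
  have hX : padicNorm p X ≤ p ^ (-((2 * N : ℕ) : ℤ)) := by
    refine padicNorm.dvd_iff_norm_le.1 ?_
    rwa [mul_comm, pow_mul, Nat.cast_pow]
  have hdecomp : ((a : ℚ) ^ m - 1) * (bernoulli m * (p ^ N : ℕ))
      = X + m * (p ^ N : ℕ) * Z
        - ((a : ℚ) ^ m - 1) * (∑ j ∈ range (p ^ N), (j : ℚ) ^ m - bernoulli m * (p ^ N : ℕ)) := by
    push_cast [X]
    ring
  have hbound : padicNorm p (((a : ℚ) ^ m - 1) * (bernoulli m * (p ^ N : ℕ)))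
      ≤ p ^ (-(e : ℤ) + -(N : ℤ)) := by
    rw [hdecomp]
    refine padicNorm.sub.trans (max_le (padicNorm.nonarchimedean.trans (max_le ?_ ?_)) ?_)
    · exact hX.trans (zpow_le_zpow_right₀ hp1.le (by omega))
    · rw [padicNorm.mul, padicNorm.mul, hnorm_m, hnorm_n, zpow_add₀ hp0]
      exact mul_le_of_le_one_right (by positivity) (padicNorm.of_int Z)
    · rw [padicNorm.mul, hunit, one_mul]
      exact (sum_range_pow_sub_bernoulli_mul_le m (by omega)).trans_eq (by congr 1; omega)
  rw [padicNorm.mul, hunit, one_mul, padicNorm.mul, hnorm_n, zpow_add₀ hp0] at hbound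
  rw [hnorm_m]
  exact le_of_mul_le_mul_right hbound (by positivity)

end padicNorm

theorem padicValRat_bernoulli_quotient_nonneg_general (p : ℕ) (hp : p.Prime)
    (k : ℕ) (hndvd : ¬ (p - 1) ∣ 2 * k) :
    0 ≤ padicValRat p (bernoulli (2 * k) / ((2 * k : ℕ) : ℚ)) := by
  have : Fact p.Prime := ⟨hp⟩
  have hk : k ≠ 0 := by
    rintro rfl
    exact hndvd (dvd_zero _)
  have hm : ((2 * k : ℕ) : ℚ) ≠ 0 := Nat.cast_ne_zero.2 (by omega)
  rcases eq_or_ne (bernoulli (2 * k)) 0 with hB | hB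
  · simp [hB]
  have hle := padicNorm.bernoulli_le_natCast_of_not_dvd hndvd
  rw [padicNorm.eq_zpow_of_nonzero hB, padicNorm.eq_zpow_of_nonzero hm,
    zpow_le_zpow_iff_right₀ (mod_cast hp.one_lt)] at hle
  rw [padicValRat.div hB hm]
  linarith

/-- §1.1 of the paper: for an odd prime `p` with `(p-1) ∤ 2k`, the Bernoulli
quotient `B_{2k}/(2k)` is `p`-integral. -/
theorem padicValRat_bernoulli_quotient_nonneg (p : ℕ) (hp : p.Prime) (hodd : Odd p)
    (k : ℕ) (hk : 1 ≤ k) (hndvd : ¬ (p - 1) ∣ 2 * k) :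
    0 ≤ padicValRat p (bernoulli (2 * k) / ((2 * k : ℕ) : ℚ)) :=
  padicValRat_bernoulli_quotient_nonneg_general p hp k hndvd
end

section
/- Let p be an odd prime, u an integer whose image in ℤ/p²ℤ is a unit of multiplicative order p(p−1) (a primitive root modulo p²), and k ≥ 1 a natural number with (p−1) dividing 2k. Then the p-adic valuation of the integer u^{2k} − 1 equals the negative of the p-adic valuation of the rational number B_{2k}/(2k); that is, padicValInt p (u^{2k} − 1) = −padicValRat p (bernoulli (2k) / (2k)). -/
/-!
By von Staudt–Clausen, `B_{2k}` differs from `-1/p` by a `p`-integral number when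
`(p - 1) ∣ 2k`, so `v_p(B_{2k}/2k) = -1 - v_p(2k)`. A primitive root `u` modulo `p²` has
`v_p(u^{p-1} - 1) = 1`, and lifting the exponent along `2k = (p - 1) m` gives
`v_p(u^{2k} - 1) = 1 + v_p(m) = 1 + v_p(2k)`, since `p ∤ p - 1`.
-/

open Finset

section LiftingTheExponent

variable {p : ℕ} [Fact p.Prime]

theorem padicValInt_eq_emultiplicity {z : ℤ} (hz : z ≠ 0) :
    (padicValInt p z : ℕ∞) = emultiplicity (p : ℤ) z := by
  rw [padicValInt.of_ne_one_ne_zero (Nat.Prime.ne_one Fact.out) hz]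
  exact (Int.finiteMultiplicity_iff.mpr
    ⟨by simpa using Nat.Prime.ne_one Fact.out, hz⟩).emultiplicity_eq_multiplicity.symm

theorem padicValInt_pow_sub_pow (hp : Odd p) {x y : ℤ} (hxy : (p : ℤ) ∣ x - y)
    (hx : ¬(p : ℤ) ∣ x) {n : ℕ} (hn : x ^ n ≠ y ^ n) :
    padicValInt p (x ^ n - y ^ n) = padicValInt p (x - y) + padicValNat p n := by
  have hn0 : n ≠ 0 := by rintro rfl; simp at hn
  have hxy0 : x - y ≠ 0 := sub_ne_zero.mpr fun h => hn (h ▸ rfl)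
  rw [← Nat.cast_inj (R := ℕ∞), Nat.cast_add,
    padicValInt_eq_emultiplicity (sub_ne_zero.mpr hn), padicValInt_eq_emultiplicity hxy0,
    padicValNat_eq_emultiplicity hn0]
  exact Int.emultiplicity_pow_sub_pow Fact.out hp hxy hx n

end LiftingTheExponent

theorem Int.pow_ne_one_of_two_lt_orderOf {R : Type*} [Ring R] {u : ℤ}
    (hu : 2 < orderOf (u : R)) {m : ℕ} (hm : m ≠ 0) : u ^ m ≠ 1 := by
  intro h
  rcases pow_eq_one_iff_cases.mp h with h | rfl | ⟨rfl, -⟩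
  · exact hm h
  · simp at hu
  · have : orderOf ((-1 : ℤ) : R) ∣ 2 := orderOf_dvd_of_pow_eq_one (by simp)
    have := Nat.le_of_dvd two_pos this
    omega

theorem padicValInt_pow_pred_sub_one_of_orderOf {p : ℕ} [Fact p.Prime] {u : ℤ}
    (hord : orderOf (u : ZMod (p ^ 2)) = p * (p - 1)) :
    padicValInt p (u ^ (p - 1) - 1) = 1 := by
  have hp := (Fact.out : p.Prime).two_le
  have hunit : IsUnit (u : ZMod (p ^ 2)) :=
    (orderOf_pos_iff.mp (by rw [hord]; exact Nat.mul_pos (by omega) (by omega))).isUnit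
  have hdvd : (p : ℤ) ∣ u ^ (p - 1) - 1 := by
    have hunit_p := hunit.map (ZMod.castHom (dvd_pow_self p two_ne_zero) (ZMod p))
    rw [map_intCast] at hunit_p
    rw [← ZMod.intCast_zmod_eq_zero_iff_dvd]
    push_cast
    rw [ZMod.pow_card_sub_one_eq_one hunit_p.ne_zero, sub_self]
  have hndvd : ¬(p : ℤ) ^ 2 ∣ u ^ (p - 1) - 1 := by
    intro h
    have hpow : (u : ZMod (p ^ 2)) ^ (p - 1) = 1 := by
      rw [← sub_eq_zero]
      exact_mod_cast (ZMod.intCast_zmod_eq_zero_iff_dvd _ (p ^ 2)).mpr (mod_cast h)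
    have := Nat.le_of_dvd (by omega) (hord ▸ orderOf_dvd_of_pow_eq_one hpow)
    have := Nat.mul_le_mul_right (p - 1) hp
    omega
  have hne : u ^ (p - 1) - 1 ≠ 0 := fun h => hndvd (h ▸ dvd_zero _)
  have h1 := ((padicValInt_dvd_iff 1 _).mp (by simpa using hdvd)).resolve_left hne
  have h2 := mt (padicValInt_dvd_iff 2 _).mpr hndvd
  omega

theorem padicValNat_sub_one_mul {p : ℕ} [Fact p.Prime] {m : ℕ} (hm : m ≠ 0) :
    padicValNat p ((p - 1) * m) = padicValNat p m := by
  have := (Fact.out : p.Prime).two_le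
  rw [padicValNat.mul (by omega) hm,
    padicValNat.eq_zero_of_not_dvd (Nat.not_dvd_of_pos_of_lt (by omega) (by omega)), zero_add]

theorem padicValInt_pow_sub_one_of_orderOf {p : ℕ} [Fact p.Prime] (hp : Odd p) {u : ℤ}
    (hord : orderOf (u : ZMod (p ^ 2)) = p * (p - 1)) {n : ℕ} (hn : n ≠ 0)
    (hdvd : (p - 1) ∣ n) : padicValInt p (u ^ n - 1) = 1 + padicValNat p n := by
  have hp3 : 3 ≤ p := by obtain ⟨r, hr⟩ := hp; have := (Fact.out : p.Prime).two_le; omega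
  obtain ⟨m, rfl⟩ := hdvd
  have hval := padicValInt_pow_pred_sub_one_of_orderOf hord
  have hdvd : (p : ℤ) ∣ u ^ (p - 1) - 1 := by
    simpa [hval] using padicValInt_dvd (p := p) (u ^ (p - 1) - 1)
  have hndvd : ¬(p : ℤ) ∣ u ^ (p - 1) := fun h => (Fact.out : p.Prime).not_dvd_one <| by
    exact_mod_cast (by simpa using dvd_sub h hdvd : (p : ℤ) ∣ 1)
  have hord2 : 2 < orderOf (u : ZMod (p ^ 2)) :=
    calc 2 < 2 * 2 := by norm_num
      _ ≤ p * (p - 1) := Nat.mul_le_mul (by omega) (by omega)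
      _ = _ := hord.symm
  have hne : (u ^ (p - 1)) ^ m ≠ 1 ^ m := by
    rw [one_pow, ← pow_mul]
    exact Int.pow_ne_one_of_two_lt_orderOf hord2 hn
  have hlte := padicValInt_pow_sub_pow hp hdvd hndvd hne
  rw [padicValNat_sub_one_mul (right_ne_zero_of_mul hn)]
  rwa [one_pow, ← pow_mul, hval] at hlte

theorem padicNorm_bernoulli_of_sub_one_dvd {p k : ℕ} [Fact p.Prime] (hk : k ≠ 0)
    (hdvd : (p - 1) ∣ 2 * k) : padicNorm p (bernoulli (2 * k)) = p := by
  obtain ⟨z, hz⟩ := Bernoulli.vonStaudt_clausen k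
  set S := (range (2 * k + 2)).filter fun q => q.Prime ∧ (q - 1) ∣ 2 * k
  have hpS : p ∈ S := mem_filter.mpr
    ⟨mem_range.mpr (by have := Nat.le_of_dvd (by omega) hdvd; omega), Fact.out, hdvd⟩
  have hsplit : bernoulli (2 * k) = (z - ∑ q ∈ S.erase p, (1 : ℚ) / q) + -(1 / p) := by
    rw [← add_sum_erase S _ hpS] at hz
    linarith
  have hrest : padicNorm p (z - ∑ q ∈ S.erase p, (1 : ℚ) / q) ≤ 1 := by
    refine padicNorm.sub.trans (max_le (padicNorm.of_int z) (padicNorm.sum_le' ?_ zero_le_one))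
    intro q hq
    obtain ⟨hqp, hqS⟩ := mem_erase.mp hq
    have hq : q.Prime := (mem_filter.mp hqS).2.1
    have : ¬p ∣ q := fun h => hqp ((Nat.prime_dvd_prime_iff_eq Fact.out hq).mp h).symm
    rw [padicNorm.div, padicNorm.one, (padicNorm.nat_eq_one_iff q).mpr this, div_one]
  have hpole : padicNorm p (-(1 / p : ℚ)) = p := by
    rw [padicNorm.neg, padicNorm.div, padicNorm.one, padicNorm.padicNorm_p_of_prime, one_div,
      inv_inv]
  have hp1 : (1 : ℚ) < p := mod_cast (Fact.out : p.Prime).one_lt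
  rw [hsplit, padicNorm.add_eq_max_of_ne (by rw [hpole]; linarith), hpole]
  exact max_eq_right (by linarith)

theorem padicValRat_bernoulli_of_sub_one_dvd {p k : ℕ} [Fact p.Prime] (hk : k ≠ 0)
    (hdvd : (p - 1) ∣ 2 * k) : padicValRat p (bernoulli (2 * k)) = -1 := by
  have hnorm := padicNorm_bernoulli_of_sub_one_dvd hk hdvd
  have hp1 : (1 : ℚ) < p := mod_cast (Fact.out : p.Prime).one_lt
  have hB : bernoulli (2 * k) ≠ 0 := fun h => by simp [h] at hnorm; linarith
  have h : (p : ℚ) ^ (-padicValRat p (bernoulli (2 * k))) = (p : ℚ) ^ (1 : ℤ) := by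
    rw [zpow_one, ← padicNorm.eq_zpow_of_nonzero hB, hnorm]
  linarith [zpow_right_injective₀ (by linarith) hp1.ne' h]

theorem padicValInt_pow_sub_one_eq_neg_padicValRat_bernoulli_general
    (p : ℕ) (hp : p.Prime) (hodd : Odd p)
    (u : ℤ)
    (hord : orderOf (u : ZMod (p ^ 2)) = p * (p - 1))
    (k : ℕ) (hk : 1 ≤ k) (hdvd : (p - 1) ∣ 2 * k) :
    (padicValInt p (u ^ (2 * k) - 1) : ℤ) =
      -padicValRat p (bernoulli (2 * k) / ((2 * k : ℕ) : ℚ)) := by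
  have := Fact.mk hp
  have hB := padicValRat_bernoulli_of_sub_one_dvd (by omega) hdvd
  rw [padicValRat.div (fun h => by simp [h] at hB) (by positivity), hB, padicValRat.of_nat,
    padicValInt_pow_sub_one_of_orderOf hodd hord (by omega) hdvd]
  push_cast
  ring

/-- §1.1 of the paper: for an odd prime `p`, `u` a primitive root modulo `p²`,
and `(p-1) ∣ 2k`, the `p`-adic valuation of `u^{2k} - 1` equals the negative of
the `p`-adic valuation of the Bernoulli quotient `B_{2k}/(2k)`. -/
theorem padicValInt_pow_sub_one_eq_neg_padicValRat_bernoulli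
    (p : ℕ) (hp : p.Prime) (hodd : Odd p)
    (u : ℤ) (hu : IsUnit (u : ZMod (p ^ 2)))
    (hord : orderOf (u : ZMod (p ^ 2)) = p * (p - 1))
    (k : ℕ) (hk : 1 ≤ k) (hdvd : (p - 1) ∣ 2 * k) :
    (padicValInt p (u ^ (2 * k) - 1) : ℤ) =
      -padicValRat p (bernoulli (2 * k) / ((2 * k : ℕ) : ℚ)) :=
  padicValInt_pow_sub_one_eq_neg_padicValRat_bernoulli_general p hp hodd u hord k hk hdvd
end
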